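/- Every right invertible λ⊥-term inhabits only right types: if ⊢ λz.zM₁…Mₘ : τ → μ in the essential intersection type system, then there exist ρ₁,…,ρₘ such that τ ≤ ρ₁ → … → ρₘ → μ and each type τ → ρᵢ is inhabited. -/

import Mathlib

/-- Terms of the λ⊥-calculus (de Bruijn indices). -/
inductive Tm : Type
  | var : ℕ → Tm
  | bot : Tm
  | lam : Tm → Tm
  | app : Tm → Tm → Tm
  deriving DecidableEq

namespace Tm

/-- Lift (shift by one) all de Bruijn indices ≥ k. -/
def lift : Tm → ℕ → Tm
  | var n, k => if n < k then var n else var (n+1)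
  | bot, _ => bot
  | lam M, k => lam (lift M (k+1))
  | app M N, k => app (lift M k) (lift N k)

/-- Capture-avoiding substitution of N for variable k. -/
def subst : Tm → ℕ → Tm → Tm
  | var n, k, N => if n < k then var n else if n = k then N else var (n-1)
  | bot, _, _ => bot
  | lam M, k, N => lam (subst M (k+1) (lift N 0))
  | app M P, k, N => app (subst M k N) (subst P k N)

/-- One-step β⊥-reduction (compatible closure). -/
inductive Step : Tm → Tm → Prop
  | beta (M N : Tm) : Step (app (lam M) N) (subst M 0 N)
  | botApp (N : Tm) : Step (app bot N) bot
  | botLam : Step (lam bot) bot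
  | appL {M M'} (N) : Step M M' → Step (app M N) (app M' N)
  | appR (M) {N N'} : Step N N' → Step (app M N) (app M N')
  | lamC {M M'} : Step M M' → Step (lam M) (lam M')

/-- Multi-step reduction. -/
def Red : Tm → Tm → Prop := Relation.ReflTransGen Step

/-- β⊥-conversion: M = N iff they have a common reduct. -/
def Conv (M N : Tm) : Prop := ∃ P, Red M P ∧ Red N P

/-- The identity combinator I = λx.x. -/
def iTm : Tm := lam (var 0)

/-- Composition M ∘ N = λz.M(Nz). -/
def comp (M N : Tm) : Tm := lam (app (lift M 0) (app (lift N 0) (var 0)))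

/-- Apply M to a list of arguments. -/
def applist (M : Tm) (Ms : List Tm) : Tm := Ms.foldl app M

/-- Iterated λ-abstraction. -/
def iterLam : ℕ → Tm → Tm
  | 0, M => M
  | n+1, M => lam (iterLam n M)

/-- The selector λt x₁ … xₘ. t  (a simple right inverse). -/
def sel (m : ℕ) : Tm := iterLam (m+1) (var m)

/-- Number of initial λ-abstractions of a term. -/
def leadLams : Tm → ℕ
  | lam M => leadLams M + 1
  | _ => 0

end Tm

mutual
/-- Strict intersection types μ ::= φ | ω | σ → μ. -/
inductive STy : Type
  | tvar : ℕ → STy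
  | omega : STy
  | arrow : ITy → STy → STy
/-- Intersections σ ::= μ | σ ∧ σ. -/
inductive ITy : Type
  | strict : STy → ITy
  | inter : ITy → ITy → ITy
end

/-- The subtyping preorder on (strict) intersection types. -/
inductive SubTy : ITy → ITy → Prop
  | refl (σ) : SubTy σ σ
  | trans {σ τ ρ} : SubTy σ τ → SubTy τ ρ → SubTy σ ρ
  | toOmega (σ) : SubTy σ (.strict .omega)
  | omegaArr : SubTy (.strict .omega) (.strict (.arrow (.strict .omega) .omega))
  | interL (σ τ) : SubTy (.inter σ τ) σ
  | interR (σ τ) : SubTy (.inter σ τ) τ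
  | interMono {σ₁ σ₂ τ₁ τ₂} : SubTy σ₁ τ₁ → SubTy σ₂ τ₂ → SubTy (.inter σ₁ σ₂) (.inter τ₁ τ₂)
  | arrow {σ τ : ITy} {μ ν : STy} : SubTy τ σ → SubTy (.strict μ) (.strict ν) →
      SubTy (.strict (.arrow σ μ)) (.strict (.arrow τ ν))

/-- σ ∼ τ : mutual subtyping. -/
def EqvTy (σ τ : ITy) : Prop := SubTy σ τ ∧ SubTy τ σ

/-- μ is a conjunct (component) of the intersection σ. -/
inductive IsComp : STy → ITy → Prop
  | strict (μ) : IsComp μ (.strict μ)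
  | left {μ σ} (τ) : IsComp μ σ → IsComp μ (.inter σ τ)
  | right {μ τ} (σ) : IsComp μ τ → IsComp μ (.inter σ τ)

/-- The essential intersection type assignment system (contexts are de Bruijn lists). -/
inductive Der : List ITy → Tm → STy → Prop
  | var {Γ n σ μ} : Γ[n]? = some σ → IsComp μ σ → Der Γ (.var n) μ
  | omega (Γ M) : Der Γ M .omega
  | sub {Γ M μ ν} : Der Γ M μ → SubTy (.strict μ) (.strict ν) → Der Γ M ν
  | lam {Γ M σ μ} : Der (σ :: Γ) M μ → Der Γ (.lam M) (.arrow σ μ)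
  | app {Γ M N σ μ} : Der Γ M (.arrow σ μ) → (∀ ν, IsComp ν σ → Der Γ N ν) →
      Der Γ (.app M N) μ

/-- A strict type is inhabited if some closed term has it. -/
def InhabS (μ : STy) : Prop := ∃ M, Der [] M μ

/-- An intersection is inhabited if a single closed term has all its conjuncts. -/
def InhabI (σ : ITy) : Prop := ∃ M, ∀ μ, IsComp μ σ → Der [] M μ

/-- σ → ρ is inhabited: one term inhabits σ → μ for every conjunct μ of ρ. -/
def InhabArrow (σ ρ : ITy) : Prop := ∃ M, ∀ μ, IsComp μ ρ → Der [] M (.arrow σ μ)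

/-- ρ₁ → … → ρₘ → μ. -/
def arrows (l : List ITy) (μ : STy) : STy := l.foldr .arrow μ

/-- μ ◁ ν : μ is a retract of ν. -/
def Retract (μ ν : STy) : Prop :=
  ∃ L R, Der [] L (.arrow (.strict ν) μ) ∧ Der [] R (.arrow (.strict μ) ν) ∧
    Tm.Conv (Tm.comp L R) Tm.iTm

/-!
Inverting the typing of `λz. z M₁ … Mₘ : τ → μ` gives `z : σ ⊢ z M₁ … Mₘ : μ₀` with
`σ → μ₀ ≤ τ → μ`. When `μ` is not equivalent to `ω`, this arrow subtyping can be inverted: `μ₀ ≤ μ`,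
and `τ` lies below every conjunct of `σ`. Inverting the applications then yields a conjunct `κ` of
`σ` with `κ ≤ ρ₁ → … → ρₘ → μ`, where each `Mᵢ` has all conjuncts of `ρᵢ` under `z : σ`. Hence
`τ ≤ κ ≤ ρ₁ → … → ρₘ → μ`, and replacing `z : σ` by `z : τ` makes `λz. Mᵢ` an inhabitant of
`τ → ρᵢ`. When `μ` is equivalent to `ω`, all `ρᵢ` can be taken to be `ω`.
-/

/-- The strict types equivalent to `ω`. -/
inductive STy.Trivial : STy → Prop
  | omega : Trivial .omega
  | arrow (σ : ITy) {ν : STy} : Trivial ν → Trivial (.arrow σ ν)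

theorem STy.Trivial.omega_subTy {ν : STy} (h : ν.Trivial) :
    SubTy (.strict .omega) (.strict ν) := by
  induction h with
  | omega => exact .refl _
  | arrow σ _ ih => exact SubTy.omegaArr.trans (.arrow (.toOmega σ) ih)

theorem STy.Trivial.arrows {μ : STy} (h : μ.Trivial) :
    ∀ ρs : List ITy, (_root_.arrows ρs μ).Trivial
  | [] => h
  | ρ :: ρs => .arrow ρ (h.arrows ρs)

theorem STy.Trivial.of_arrows {μ : STy} :
    ∀ {ρs : List ITy}, (_root_.arrows ρs μ).Trivial → μ.Trivial
  | [], h => h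
  | _ :: _, .arrow _ h => of_arrows h

theorem ITy.exists_isComp : ∀ σ : ITy, ∃ γ, IsComp γ σ
  | .strict μ => ⟨μ, .strict μ⟩
  | .inter σ _ => let ⟨γ, hγ⟩ := σ.exists_isComp; ⟨γ, .left _ hγ⟩

theorem IsComp.subTy {γ : STy} {σ : ITy} (h : IsComp γ σ) : SubTy σ (.strict γ) := by
  induction h with
  | strict => exact .refl _
  | left _ _ ih => exact (SubTy.interL _ _).trans ih
  | right _ _ ih => exact (SubTy.interR _ _).trans ih

theorem SubTy.trivial_of_isComp {a b : ITy} (h : SubTy a b)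
    (ha : ∀ μ, IsComp μ a → μ.Trivial) : ∀ ν, IsComp ν b → ν.Trivial := by
  induction h with
  | refl => exact ha
  | trans _ _ ih₁ ih₂ => exact ih₂ (ih₁ ha)
  | toOmega => rintro _ ⟨⟩; exact .omega
  | omegaArr => rintro _ ⟨⟩; exact .arrow _ .omega
  | interL => exact fun ν hν => ha ν (.left _ hν)
  | interR => exact fun ν hν => ha ν (.right _ hν)
  | interMono _ _ ih₁ ih₂ =>
      intro ν hν
      cases hν with
      | left _ hν => exact ih₁ (fun μ hμ => ha μ (.left _ hμ)) ν hν
      | right _ hν => exact ih₂ (fun μ hμ => ha μ (.right _ hμ)) ν hν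
  | arrow _ _ _ ih =>
      rintro _ ⟨⟩
      cases ha _ (.strict _) with
      | arrow _ hμ => exact .arrow _ (ih (by rintro _ ⟨⟩; exact hμ) _ (.strict _))

theorem SubTy.trivial {μ ν : STy} (h : SubTy (.strict μ) (.strict ν)) (hμ : μ.Trivial) :
    ν.Trivial :=
  h.trivial_of_isComp (by rintro _ ⟨⟩; exact hμ) ν (.strict ν)

/-- The information a subtyping `μ ≤ ν` between strict types carries at their heads. It is the
invariant that survives transitivity, which makes arrow subtyping invertible. -/
def HeadSub : STy → STy → Prop
  | .tvar m, .tvar n => m = n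
  | .arrow σ μ, .arrow τ ν =>
      (∀ δ, IsComp δ σ → ∃ γ, IsComp γ τ ∧ SubTy (.strict γ) (.strict δ)) ∧
      SubTy (.strict μ) (.strict ν)
  | _, _ => False

theorem HeadSub.refl {ν : STy} (h : ¬ν.Trivial) : HeadSub ν ν := by
  cases ν with
  | tvar n => rfl
  | omega => exact absurd .omega h
  | arrow σ μ => exact ⟨fun δ hδ => ⟨δ, hδ, .refl _⟩, .refl _⟩

theorem HeadSub.trans {a b c : STy} (h₁ : HeadSub a b) (h₂ : HeadSub b c) : HeadSub a c := by
  cases a <;> cases b <;> cases c <;> simp only [HeadSub] at h₁ h₂ ⊢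
  · exact h₁.trans h₂
  · obtain ⟨hdom₁, hcod₁⟩ := h₁
    obtain ⟨hdom₂, hcod₂⟩ := h₂
    refine ⟨fun δ hδ => ?_, hcod₁.trans hcod₂⟩
    obtain ⟨γ, hγ, hγδ⟩ := hdom₁ δ hδ
    obtain ⟨γ', hγ', hγ'γ⟩ := hdom₂ γ hγ
    exact ⟨γ', hγ', hγ'γ.trans hγδ⟩

theorem SubTy.exists_isComp_headSub {a b : ITy} (h : SubTy a b) :
    ∀ ν, IsComp ν b → ¬ν.Trivial →
      ∃ μ, IsComp μ a ∧ SubTy (.strict μ) (.strict ν) ∧ HeadSub μ ν := by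
  induction h with
  | refl => exact fun ν hν hnt => ⟨ν, hν, .refl _, .refl hnt⟩
  | trans _ _ ih₁ ih₂ =>
      intro ν hν hnt
      obtain ⟨μ, hμ, hμν, hhμν⟩ := ih₂ ν hν hnt
      obtain ⟨κ, hκ, hκμ, hhκμ⟩ := ih₁ μ hμ (fun ht => hnt (hμν.trivial ht))
      exact ⟨κ, hκ, hκμ.trans hμν, hhκμ.trans hhμν⟩
  | toOmega => rintro _ ⟨⟩ hnt; exact absurd .omega hnt
  | omegaArr => rintro _ ⟨⟩ hnt; exact absurd (.arrow _ .omega) hnt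
  | interL => exact fun ν hν hnt => ⟨ν, .left _ hν, .refl _, .refl hnt⟩
  | interR => exact fun ν hν hnt => ⟨ν, .right _ hν, .refl _, .refl hnt⟩
  | interMono _ _ ih₁ ih₂ =>
      intro ν hν hnt
      cases hν with
      | left _ hν =>
          obtain ⟨μ, hμ, hμν, hhμν⟩ := ih₁ ν hν hnt
          exact ⟨μ, .left _ hμ, hμν, hhμν⟩
      | right _ hν =>
          obtain ⟨μ, hμ, hμν, hhμν⟩ := ih₂ ν hν hnt
          exact ⟨μ, .right _ hμ, hμν, hhμν⟩
  | @arrow σ τ _ _ hτσ hμν ih =>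
      rintro _ ⟨⟩ _
      refine ⟨_, .strict _, .arrow hτσ hμν, fun δ hδ => ?_, hμν⟩
      by_cases hδt : δ.Trivial
      · obtain ⟨γ, hγ⟩ := τ.exists_isComp
        exact ⟨γ, hγ, (SubTy.toOmega _).trans hδt.omega_subTy⟩
      · obtain ⟨γ, hγ, hγδ, -⟩ := ih δ hδ hδt
        exact ⟨γ, hγ, hγδ⟩

theorem SubTy.exists_isComp_subTy {σ : ITy} {ν : STy} (h : SubTy σ (.strict ν))
    (hν : ¬ν.Trivial) : ∃ κ, IsComp κ σ ∧ SubTy (.strict κ) (.strict ν) :=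
  let ⟨κ, hκ, hκν, _⟩ := h.exists_isComp_headSub ν (.strict ν) hν
  ⟨κ, hκ, hκν⟩

/-- `σ' ≤ σ` conjunct by conjunct; weaker than `SubTy σ' σ`, since intersection introduction is not
a subtyping rule. -/
def SubComps (σ' σ : ITy) : Prop := ∀ δ, IsComp δ σ → SubTy σ' (.strict δ)

theorem SubTy.arrow_inv {σ τ : ITy} {μ ν : STy}
    (h : SubTy (.strict (.arrow σ μ)) (.strict (.arrow τ ν))) (hν : ¬ν.Trivial) :
    SubComps τ σ ∧ SubTy (.strict μ) (.strict ν) := by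
  obtain ⟨_, ⟨⟩, -, hdom, hcod⟩ :=
    h.exists_isComp_headSub _ (.strict _) (fun ht => by cases ht; contradiction)
  refine ⟨fun δ hδ => ?_, hcod⟩
  obtain ⟨γ, hγ, hγδ⟩ := hdom δ hδ
  exact hγ.subTy.trans hγδ

def DerI (Γ : List ITy) (M : Tm) (σ : ITy) : Prop := ∀ μ, IsComp μ σ → Der Γ M μ

theorem List.Forall₂.exists_getElem?_left {α β : Type*} {R : α → β → Prop} :
    ∀ {l₁ : List α} {l₂ : List β}, Forall₂ R l₁ l₂ → ∀ {n : ℕ} {b : β}, l₂[n]? = some b →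
      ∃ a, l₁[n]? = some a ∧ R a b
  | _, _, .nil, _, _, h => by simp at h
  | a :: _, _, .cons hab _, 0, _, h => by cases h; exact ⟨a, rfl, hab⟩
  | _, _, .cons _ hl, _ + 1, _, h => hl.exists_getElem?_left h

theorem Der.var_of_subTy {Γ : List ITy} {n : ℕ} {σ : ITy} {μ : STy} (hΓ : Γ[n]? = some σ)
    (h : SubTy σ (.strict μ)) : Der Γ (.var n) μ := by
  by_cases hμ : μ.Trivial
  · exact (Der.omega Γ _).sub hμ.omega_subTy
  · obtain ⟨κ, hκ, hκμ⟩ := h.exists_isComp_subTy hμ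
    exact (Der.var hΓ hκ).sub hκμ

theorem Der.of_forall₂_subComps {Γ Γ' : List ITy} {M : Tm} {ν : STy} (h : Der Γ M ν)
    (hΓ : List.Forall₂ SubComps Γ' Γ) : Der Γ' M ν := by
  induction h generalizing Γ' with
  | var hσ hμ =>
      obtain ⟨σ', hσ', hσ'σ⟩ := hΓ.exists_getElem?_left hσ
      exact .var_of_subTy hσ' (hσ'σ _ hμ)
  | omega => exact .omega _ _
  | sub _ hs ih => exact (ih hΓ).sub hs
  | lam _ ih => exact .lam (ih (.cons (fun _ hδ => hδ.subTy) hΓ))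
  | app _ _ ihM ihN => exact .app (ihM hΓ) (fun δ hδ => ihN δ hδ hΓ)

theorem Der.var_inv {Γ : List ITy} {n : ℕ} {κ : STy} (h : Der Γ (.var n) κ) (hκ : ¬κ.Trivial) :
    ∃ σ μ, Γ[n]? = some σ ∧ IsComp μ σ ∧ SubTy (.strict μ) (.strict κ) := by
  generalize ht : Tm.var n = t at h
  induction h with
  | var hσ hμ => cases ht; exact ⟨_, _, hσ, hμ, .refl _⟩
  | omega => exact absurd .omega hκ
  | sub _ hs ih =>
      obtain ⟨σ, μ, hσ, hμ, hμκ⟩ := ih (fun ht => hκ (hs.trivial ht)) ht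
      exact ⟨σ, μ, hσ, hμ, hμκ.trans hs⟩
  | lam => cases ht
  | app => cases ht

theorem Der.lam_inv {Γ : List ITy} {M : Tm} {κ : STy} (h : Der Γ (.lam M) κ) :
    ∃ σ μ, Der (σ :: Γ) M μ ∧ SubTy (.strict (.arrow σ μ)) (.strict κ) := by
  generalize ht : Tm.lam M = t at h
  induction h with
  | var => cases ht
  | omega => exact ⟨.strict .omega, .omega, .omega _ _, .toOmega _⟩
  | sub _ hs ih =>
      obtain ⟨σ, μ, hM, hsub⟩ := ih ht
      exact ⟨σ, μ, hM, hsub.trans hs⟩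
  | lam hM => cases ht; exact ⟨_, _, hM, .refl _⟩
  | app => cases ht

theorem Der.app_inv {Γ : List ITy} {M N : Tm} {κ : STy} (h : Der Γ (.app M N) κ) :
    ∃ ρ, Der Γ M (.arrow ρ κ) ∧ DerI Γ N ρ := by
  generalize ht : Tm.app M N = t at h
  induction h with
  | var => cases ht
  | omega =>
      refine ⟨.strict .omega, (Der.omega _ _).sub .omegaArr, ?_⟩
      rintro _ ⟨⟩
      exact .omega _ _
  | sub _ hs ih =>
      obtain ⟨ρ, hM, hN⟩ := ih ht
      exact ⟨ρ, hM.sub (.arrow (.refl ρ) hs), hN⟩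
  | lam => cases ht
  | app hM hN => cases ht; exact ⟨_, hM, hN⟩

theorem Der.applist_inv {Γ : List ITy} {μ : STy} :
    ∀ {M : Tm} {Ms : List Tm}, Der Γ (Tm.applist M Ms) μ →
      ∃ ρs, Der Γ M (arrows ρs μ) ∧ List.Forall₂ (fun ρ N => DerI Γ N ρ) ρs Ms
  | _, [], h => ⟨[], h, .nil⟩
  | _, _ :: _, h =>
      let ⟨ρs, hMN, hMs⟩ := applist_inv (M := .app _ _) h
      let ⟨ρ, hM, hN⟩ := hMN.app_inv
      ⟨ρ :: ρs, hM, .cons hN hMs⟩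

/-- right invertible terms inhabit only right types. -/
theorem right_invertible_types {Ms : List Tm} {τ : ITy} {μ : STy}
    (h : Der [] (.lam (Tm.applist (.var 0) Ms)) (.arrow τ μ)) :
    ∃ ρs : List ITy, ρs.length = Ms.length ∧
      SubTy τ (.strict (arrows ρs μ)) ∧ ∀ ρ ∈ ρs, InhabArrow τ ρ := by
  by_cases hμ : μ.Trivial
  · refine ⟨List.replicate Ms.length (.strict .omega), List.length_replicate,
      (SubTy.toOmega τ).trans (hμ.arrows _).omega_subTy, fun ρ hρ => ?_⟩
    rw [List.eq_of_mem_replicate hρ]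
    exact ⟨.lam .bot, by rintro _ ⟨⟩; exact .lam (.omega _ _)⟩
  obtain ⟨σ, μ₀, hbody, hσμ₀⟩ := h.lam_inv
  obtain ⟨hτσ, hμ₀μ⟩ := hσμ₀.arrow_inv hμ
  obtain ⟨ρs, hhead, hargs⟩ := (hbody.sub hμ₀μ).applist_inv
  obtain ⟨_, κ, ⟨⟩, hκ, hκρs⟩ := hhead.var_inv (mt STy.Trivial.of_arrows hμ)
  refine ⟨ρs, hargs.length_eq, (hτσ κ hκ).trans hκρs, ?_⟩
  have hinhab : List.Forall₂ (fun ρ N => InhabArrow τ ρ ∧ DerI [σ] N ρ) ρs Ms :=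
    hargs.imp fun ρ N hN =>
      ⟨⟨.lam N, fun δ hδ => .lam ((hN δ hδ).of_forall₂_subComps (.cons hτσ .nil))⟩, hN⟩
  exact ((List.forall₂_and_left _ _).1 hinhab).1
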